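/- arXiv:2306.08837 — 8 statements merged into one kernel-verified Lean document; each statement's English description precedes it below -/
import Mathlib

section
/- For the Holt potential Hamiltonian H = (p₁² + p₂²)/2 + (q₁² + 4q₂²)/2 + δ/q₁² with δ > 0, the function Θ = (i/2)·log(2δ/q₁² − 2i q₁p₁ + p₁² − q₁²) − (1/2)·arctan(2q₂/p₂), viewed via its real-analytic expression (e.g., the imaginary part of the complex logarithm is the phase), has vanishing Poisson bracket with H on the open set q₁ ≠ 0, p₂ ≠ 0 where it is defined. Equivalently: the derivative of Θ along the Hamiltonian vector field of H vanishes. -/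
/-!
Both Θ and H split into a `(q₁, p₁)` part and a `(q₂, p₂)` part, so each bracket is a sum of
two brackets in one degree of freedom. Writing `w = 2δ/q₁² + (p₁ - i q₁)²`, one checks
`{w, H₁} = -2i w`, hence `{log w, H₁} = -2i`: `ln |w|` is conserved and `arg w` has bracket `-2`.
For the oscillator `H₂ = p₂²/2 + 2 q₂²` one has `{arctan (2q₂/p₂), H₂} = 2`, so the two phase
terms of `Re Θ` cancel.
-/

/-- Canonical Poisson bracket on ℝ⁴ in coordinates (q₁, q₂, p₁, p₂). -/
noncomputable def poissonBracket (F G : ℝ → ℝ → ℝ → ℝ → ℝ) (q1 q2 p1 p2 : ℝ) : ℝ :=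
  deriv (fun x => F x q2 p1 p2) q1 * deriv (fun x => G q1 q2 x p2) p1
  - deriv (fun x => F q1 q2 x p2) p1 * deriv (fun x => G x q2 p1 p2) q1
  + deriv (fun x => F q1 x p1 p2) q2 * deriv (fun x => G q1 q2 p1 x) p2
  - deriv (fun x => F q1 q2 p1 x) p2 * deriv (fun x => G q1 x p1 p2) q2

/-- The complex quantity appearing in the Holt-potential first integral:
w = 2δ/q₁² − 2i q₁p₁ + p₁² − q₁². -/
noncomputable def holtW (δ q1 p1 : ℝ) : ℂ :=
  (2 * δ / q1 ^ 2 : ℝ) - 2 * Complex.I * (q1 : ℂ) * (p1 : ℂ)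
    + (p1 : ℝ) ^ 2 - (q1 : ℝ) ^ 2

open Complex

noncomputable def poissonBracket₁ (f g : ℝ → ℝ → ℝ) (q p : ℝ) : ℝ :=
  deriv (fun x => f x p) q * deriv (fun x => g q x) p
  - deriv (fun x => f q x) p * deriv (fun x => g x p) q

theorem poissonBracket_add_add (f g h k : ℝ → ℝ → ℝ) (q1 q2 p1 p2 : ℝ) :
    poissonBracket (fun q1 q2 p1 p2 => f q1 p1 + g q2 p2)
      (fun q1 q2 p1 p2 => h q1 p1 + k q2 p2) q1 q2 p1 p2
      = poissonBracket₁ f h q1 p1 + poissonBracket₁ g k q2 p2 := by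
  simp only [poissonBracket, poissonBracket₁, deriv_add_const, deriv_const_add]
  ring

theorem poissonBracket₁_const_mul (c : ℝ) (f g : ℝ → ℝ → ℝ) (q p : ℝ) :
    poissonBracket₁ (fun q p => c * f q p) g q p = c * poissonBracket₁ f g q p := by
  simp only [poissonBracket₁, deriv_const_mul_field']
  ring

theorem poissonBracket₁_const_left (c : ℝ) (g : ℝ → ℝ → ℝ) (q p : ℝ) :
    poissonBracket₁ (fun _ _ => c) g q p = 0 := by
  simp [poissonBracket₁]

theorem poissonBracket₁_eq_of_hasDerivAt {f g : ℝ → ℝ → ℝ} {q p fq fp gq gp : ℝ}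
    (hfq : HasDerivAt (f · p) fq q) (hfp : HasDerivAt (f q ·) fp p)
    (hgq : HasDerivAt (g · p) gq q) (hgp : HasDerivAt (g q ·) gp p) :
    poissonBracket₁ f g q p = fq * gp - fp * gq := by
  rw [poissonBracket₁, hfq.deriv, hfp.deriv, hgq.deriv, hgp.deriv]

theorem HasDerivAt.arg_real {f : ℝ → ℂ} {f' : ℂ} {x : ℝ} (hf : HasDerivAt f f' x)
    (hx : f x ∈ slitPlane) : HasDerivAt (fun t => arg (f t)) (f' / f x).im x := by
  simpa [Function.comp_def, log_im] using
    imCLM.hasFDerivAt.comp_hasDerivAt x (hf.clog_real hx)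

theorem HasDerivAt.log_norm_real {f : ℝ → ℂ} {f' : ℂ} {x : ℝ} (hf : HasDerivAt f f' x)
    (hx : f x ∈ slitPlane) : HasDerivAt (fun t => Real.log ‖f t‖) (f' / f x).re x := by
  simpa [Function.comp_def, log_re] using
    reCLM.hasFDerivAt.comp_hasDerivAt x (hf.clog_real hx)

theorem poissonBracket₁_arg_log_norm {w : ℝ → ℝ → ℂ} {h : ℝ → ℝ → ℝ} {q p : ℝ}
    {wq wp : ℂ} {hq hp : ℝ} (hw : w q p ∈ slitPlane)
    (hwq : HasDerivAt (w · p) wq q) (hwp : HasDerivAt (w q ·) wp p)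
    (hhq : HasDerivAt (h · p) hq q) (hhp : HasDerivAt (h q ·) hp p) :
    poissonBracket₁ (fun q p => arg (w q p)) h q p = ((wq * hp - wp * hq) / w q p).im ∧
      poissonBracket₁ (fun q p => Real.log ‖w q p‖) h q p
        = ((wq * hp - wp * hq) / w q p).re := by
  have hsplit : (wq * hp - wp * hq) / w q p = wq / w q p * hp - wp / w q p * hq := by ring
  rw [hsplit, poissonBracket₁_eq_of_hasDerivAt (hwq.arg_real hw) (hwp.arg_real hw) hhq hhp,
    poissonBracket₁_eq_of_hasDerivAt (hwq.log_norm_real hw) (hwp.log_norm_real hw) hhq hhp]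
  simp

theorem holtW_eq (δ q p : ℝ) : holtW δ q p = ((2 * δ / q ^ 2 : ℝ) : ℂ) + (p - q * I) ^ 2 := by
  rw [holtW]
  push_cast
  linear_combination (-(q : ℂ) ^ 2) * I_sq

theorem hasDerivAt_holtW_fst (δ p : ℝ) {q : ℝ} (hq : q ≠ 0) :
    HasDerivAt (holtW δ · p) (((-4 * δ / q ^ 3 : ℝ) : ℂ) - 2 * I * (p - q * I)) q := by
  have hpot : HasDerivAt (fun x : ℝ => 2 * δ / x ^ 2) (-4 * δ / q ^ 3) q := by
    refine ((hasDerivAt_const q (2 * δ)).div (hasDerivAt_pow 2 q) (pow_ne_zero 2 hq)).congr_deriv ?_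
    field_simp
    ring
  have hkin : HasDerivAt (fun x : ℝ => ((p : ℂ) - x * I) ^ 2) (-2 * I * (p - q * I)) q := by
    refine (((((hasDerivAt_id' q).ofReal_comp).mul_const I).const_sub (p : ℂ)).pow 2).congr_deriv ?_
    push_cast
    ring
  simp only [holtW_eq]
  refine (hpot.ofReal_comp.add hkin).congr_deriv ?_
  ring

theorem hasDerivAt_holtW_snd (δ q p : ℝ) :
    HasDerivAt (holtW δ q ·) (2 * (p - q * I)) p := by
  simp only [holtW_eq]
  refine (((((hasDerivAt_id' p).ofReal_comp).sub_const (q * I)).pow 2).const_add _).congr_deriv ?_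
  push_cast
  ring

noncomputable def holtH₁ (δ q p : ℝ) : ℝ := p ^ 2 / 2 + q ^ 2 / 2 + δ / q ^ 2

noncomputable def holtH₂ (q p : ℝ) : ℝ := p ^ 2 / 2 + 2 * q ^ 2

theorem hasDerivAt_holtH₁_fst (δ p : ℝ) {q : ℝ} (hq : q ≠ 0) :
    HasDerivAt (holtH₁ δ · p) (q - 2 * δ / q ^ 3) q := by
  refine (((hasDerivAt_pow 2 q).div_const 2).const_add (p ^ 2 / 2) |>.add
    ((hasDerivAt_const q δ).div (hasDerivAt_pow 2 q) (pow_ne_zero 2 hq))).congr_deriv ?_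
  field_simp
  ring

theorem hasDerivAt_holtH₁_snd (δ q p : ℝ) : HasDerivAt (holtH₁ δ q ·) p p := by
  refine ((((hasDerivAt_pow 2 p).div_const 2).add_const (q ^ 2 / 2)).add_const
    (δ / q ^ 2)).congr_deriv ?_
  ring

theorem hasDerivAt_holtH₂_fst (q p : ℝ) : HasDerivAt (holtH₂ · p) (4 * q) q := by
  refine (((hasDerivAt_pow 2 q).const_mul 2).const_add (p ^ 2 / 2)).congr_deriv ?_
  ring

theorem hasDerivAt_holtH₂_snd (q p : ℝ) : HasDerivAt (holtH₂ q ·) p p := by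
  refine (((hasDerivAt_pow 2 p).div_const 2).add_const (2 * q ^ 2)).congr_deriv ?_
  ring

theorem holtW_bracket_holtH₁ (δ p : ℝ) {q : ℝ} (hq : q ≠ 0) :
    (((-4 * δ / q ^ 3 : ℝ) : ℂ) - 2 * I * (p - q * I)) * (p : ℂ)
      - 2 * (p - q * I) * ((q - 2 * δ / q ^ 3 : ℝ) : ℂ) = -2 * I * holtW δ q p := by
  rw [holtW_eq]
  have hq' : (q : ℂ) ≠ 0 := ofReal_ne_zero.mpr hq
  push_cast
  field_simp
  linear_combination (2 * (q : ℂ) ^ 5 * I - 2 * p * q ^ 4) * I_sq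

theorem poissonBracket₁_arg_log_norm_holtW {δ q p : ℝ} (hq : q ≠ 0) (hw : holtW δ q p ∈ slitPlane) :
    poissonBracket₁ (fun q p => arg (holtW δ q p)) (holtH₁ δ) q p = -2 ∧
      poissonBracket₁ (fun q p => Real.log ‖holtW δ q p‖) (holtH₁ δ) q p = 0 := by
  have hlog := poissonBracket₁_arg_log_norm hw (hasDerivAt_holtW_fst δ p hq)
    (hasDerivAt_holtW_snd δ q p) (hasDerivAt_holtH₁_fst δ p hq) (hasDerivAt_holtH₁_snd δ q p)
  rw [holtW_bracket_holtH₁ δ p hq, mul_div_assoc, div_self (slitPlane_ne_zero hw)] at hlog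
  simpa using hlog

theorem poissonBracket₁_arctan_holtH₂ {q p : ℝ} (hp : p ≠ 0) :
    poissonBracket₁ (fun q p => Real.arctan (2 * q / p)) holtH₂ q p = 2 := by
  have hq : HasDerivAt (fun x => 2 * x / p) (2 / p) q := by
    simpa using ((hasDerivAt_id q).const_mul 2).div_const p
  have hp' : HasDerivAt (fun x => 2 * q / x) (-(2 * q) / p ^ 2) p := by
    simpa [div_eq_mul_inv] using (hasDerivAt_inv hp).const_mul (2 * q)
  rw [poissonBracket₁_eq_of_hasDerivAt hq.arctan hp'.arctan (hasDerivAt_holtH₂_fst q p)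
    (hasDerivAt_holtH₂_snd q p)]
  field_simp
  ring

theorem holt_potential_theta_conserved_general
    (δ : ℝ)
    (H ΘRe ΘIm : ℝ → ℝ → ℝ → ℝ → ℝ)
    (hH : H = fun q1 q2 p1 p2 =>
      (p1 ^ 2 + p2 ^ 2) / 2 + (q1 ^ 2 + 4 * q2 ^ 2) / 2 + δ / q1 ^ 2)
    (hΘRe : ΘRe = fun q1 q2 p1 p2 =>
      -(1 / 2) * Complex.arg (holtW δ q1 p1) - (1 / 2) * Real.arctan (2 * q2 / p2))
    (hΘIm : ΘIm = fun q1 q2 p1 p2 =>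
      (1 / 2) * Real.log ‖holtW δ q1 p1‖) :
    ∀ q1 q2 p1 p2 : ℝ, q1 ≠ 0 → p2 ≠ 0 →
      (0 < (holtW δ q1 p1).re ∨ (holtW δ q1 p1).im ≠ 0) →
      poissonBracket ΘRe H q1 q2 p1 p2 = 0 ∧
      poissonBracket ΘIm H q1 q2 p1 p2 = 0 := by
  intro q1 q2 p1 p2 hq1 hp2 hw
  have hH' : H = fun q1 q2 p1 p2 => holtH₁ δ q1 p1 + holtH₂ q2 p2 := by
    subst hH; funext q1 q2 p1 p2; simp only [holtH₁, holtH₂]; ring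
  have hΘRe' : ΘRe = fun q1 q2 p1 p2 =>
      -(1 / 2) * arg (holtW δ q1 p1) + -(1 / 2) * Real.arctan (2 * q2 / p2) := by
    subst hΘRe; funext q1 q2 p1 p2; ring
  have hΘIm' : ΘIm = fun q1 _ p1 _ => (1 / 2) * Real.log ‖holtW δ q1 p1‖ + 0 := by
    simp only [hΘIm, add_zero]
  obtain ⟨harg, hlog⟩ := poissonBracket₁_arg_log_norm_holtW hq1 hw
  rw [hH', hΘRe', hΘIm', poissonBracket_add_add, poissonBracket_add_add,
    poissonBracket₁_const_mul, poissonBracket₁_const_mul, poissonBracket₁_const_mul,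
    harg, hlog, poissonBracket₁_arctan_holtH₂ hp2, poissonBracket₁_const_left]
  norm_num

/-- For the Holt potential H = (p₁²+p₂²)/2 + (q₁²+4q₂²)/2 + δ/q₁², the real and
imaginary parts of Θ = (i/2)·log(w) − (1/2)·arctan(2q₂/p₂), namely
Re Θ = −(1/2)·arg w − (1/2)·arctan(2q₂/p₂) and Im Θ = (1/2)·ln|w|,
Poisson-commute with H on the open set q₁ ≠ 0, p₂ ≠ 0 avoiding the branch cut
of the principal logarithm. -/
theorem holt_potential_theta_conserved
    (δ : ℝ) (hδ : 0 < δ)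
    (H ΘRe ΘIm : ℝ → ℝ → ℝ → ℝ → ℝ)
    (hH : H = fun q1 q2 p1 p2 =>
      (p1 ^ 2 + p2 ^ 2) / 2 + (q1 ^ 2 + 4 * q2 ^ 2) / 2 + δ / q1 ^ 2)
    (hΘRe : ΘRe = fun q1 q2 p1 p2 =>
      -(1 / 2) * Complex.arg (holtW δ q1 p1) - (1 / 2) * Real.arctan (2 * q2 / p2))
    (hΘIm : ΘIm = fun q1 q2 p1 p2 =>
      (1 / 2) * Real.log ‖holtW δ q1 p1‖) :
    ∀ q1 q2 p1 p2 : ℝ, q1 ≠ 0 → p2 ≠ 0 →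
      (0 < (holtW δ q1 p1).re ∨ (holtW δ q1 p1).im ≠ 0) →
      poissonBracket ΘRe H q1 q2 p1 p2 = 0 ∧
      poissonBracket ΘIm H q1 q2 p1 p2 = 0 :=
  holt_potential_theta_conserved_general δ H ΘRe ΘIm hH hΘRe hΘIm
end

section
/- For the Bateman Hamiltonian H_B = p_x p_y + ω² x y − γ(x p_x − y p_y), the functions H_ω = p_x p_y + ω² x y and H_γ = −γ(x p_x − y p_y) each Poisson-commute with H_B: {H_ω, H_B} = 0 and {H_γ, H_B} = 0. -/
/-! Each of p_x p_y, x y and x p_x − y p_y is affine in every single coordinate, so the partial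
derivatives of a p_x p_y + b x y + c (x p_x − y p_y) can be read off, and the bracket of two such
combinations is (b a' − a b') (x p_x + y p_y): only {p_x p_y, x y} = −(x p_x + y p_y) survives.
The coefficient vectors of H_ω, H_γ and H_B are (1, ω², 0), (0, 0, −γ) and (1, ω², −γ), whose
first two entries are proportional. -/

noncomputable def poissonBracketB (F G : ℝ → ℝ → ℝ → ℝ → ℝ) (x y px py : ℝ) : ℝ :=
  deriv (fun s => F s y px py) x * deriv (fun s => G x y s py) px
  - deriv (fun s => F x y s py) px * deriv (fun s => G s y px py) x
  + deriv (fun s => F x s px py) y * deriv (fun s => G x y px s) py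
  - deriv (fun s => F x y px s) py * deriv (fun s => G x s px py) y

lemma deriv_of_affine {f : ℝ → ℝ} {m : ℝ} (hf : ∀ s, f s = m * s + f 0) (t : ℝ) :
    deriv f t = m := by
  rw [funext hf]
  exact (((hasDerivAt_id' t).const_mul m).add_const (f 0)).deriv.trans (mul_one m)

def batemanFamily (a b c : ℝ) (x y px py : ℝ) : ℝ :=
  a * (px * py) + b * (x * y) + c * (x * px - y * py)

section batemanFamily

variable (a b c x y px py : ℝ)

lemma deriv_batemanFamily_x : deriv (fun s => batemanFamily a b c s y px py) x = b * y + c * px :=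
  deriv_of_affine (fun s => by simp only [batemanFamily]; ring) x

lemma deriv_batemanFamily_y : deriv (fun s => batemanFamily a b c x s px py) y = b * x - c * py :=
  deriv_of_affine (fun s => by simp only [batemanFamily]; ring) y

lemma deriv_batemanFamily_px :
    deriv (fun s => batemanFamily a b c x y s py) px = a * py + c * x :=
  deriv_of_affine (fun s => by simp only [batemanFamily]; ring) px

lemma deriv_batemanFamily_py :
    deriv (fun s => batemanFamily a b c x y px s) py = a * px - c * y :=
  deriv_of_affine (fun s => by simp only [batemanFamily]; ring) py

end batemanFamily

lemma poissonBracketB_batemanFamily (a b c a' b' c' x y px py : ℝ) :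
    poissonBracketB (batemanFamily a b c) (batemanFamily a' b' c') x y px py
      = (b * a' - a * b') * (x * px + y * py) := by
  simp only [poissonBracketB, deriv_batemanFamily_x, deriv_batemanFamily_y,
    deriv_batemanFamily_px, deriv_batemanFamily_py]
  ring

/-- H_ω = p_xp_y + ω²xy and H_γ = −γ(xp_x − yp_y) both Poisson-commute with
the Bateman Hamiltonian H_B = H_ω + H_γ. -/
theorem bateman_first_integrals
    (γ ω : ℝ) (HB Hω Hγ : ℝ → ℝ → ℝ → ℝ → ℝ)
    (hHB : HB = fun x y px py => px * py + ω ^ 2 * x * y - γ * (x * px - y * py))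
    (hHω : Hω = fun x y px py => px * py + ω ^ 2 * x * y)
    (hHγ : Hγ = fun x y px py => -γ * (x * px - y * py)) :
    ∀ x y px py : ℝ,
      poissonBracketB Hω HB x y px py = 0 ∧ poissonBracketB Hγ HB x y px py = 0 := by
  have hB : HB = batemanFamily 1 (ω ^ 2) (-γ) := by
    subst hHB; funext x y px py; simp only [batemanFamily]; ring
  have hω : Hω = batemanFamily 1 (ω ^ 2) 0 := by
    subst hHω; funext x y px py; simp only [batemanFamily]; ring
  have hγ : Hγ = batemanFamily 0 0 (-γ) := by
    subst hHγ; funext x y px py; simp only [batemanFamily]; ring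
  intro x y px py
  simp only [hB, hω, hγ, poissonBracketB_batemanFamily]
  constructor <;> ring
end

section
/- For the Bateman system, the function Θ₁ = (1/(2γ))·log(p_x² + ω²y²) + (1/ω)·arctan(p_x/(ω y)) satisfies {Θ₁, H_B} = 0 on the open set where y ≠ 0 and p_x² + ω²y² > 0. -/
/-! Θ₁ depends only on `y` and `p_x`, and with `Q = p_x² + ω²y²` its partial derivatives are
`∂Θ₁/∂p_x = (p_x/γ + y)/Q` and `∂Θ₁/∂y = (ω²y/γ - p_x)/Q`. Hence
`Q·{Θ₁, H_B} = -(p_x/γ + y)(ω²y - γp_x) + (ω²y/γ - p_x)(p_x + γy)`, which vanishes identically. -/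

open Real

lemma poissonBracketB_eq_of_hasDerivAt {F G : ℝ → ℝ → ℝ → ℝ → ℝ} {x y px py : ℝ}
    {Fx Fy Fpx Fpy Gx Gy Gpx Gpy : ℝ}
    (hFx : HasDerivAt (fun s => F s y px py) Fx x) (hFy : HasDerivAt (fun s => F x s px py) Fy y)
    (hFpx : HasDerivAt (fun s => F x y s py) Fpx px) (hFpy : HasDerivAt (fun s => F x y px s) Fpy py)
    (hGx : HasDerivAt (fun s => G s y px py) Gx x) (hGy : HasDerivAt (fun s => G x s px py) Gy y)
    (hGpx : HasDerivAt (fun s => G x y s py) Gpx px) (hGpy : HasDerivAt (fun s => G x y px s) Gpy py) :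
    poissonBracketB F G x y px py = Fx * Gpx - Fpx * Gx + Fy * Gpy - Fpy * Gy := by
  rw [poissonBracketB, hFx.deriv, hFy.deriv, hFpx.deriv, hFpy.deriv, hGx.deriv, hGy.deriv,
    hGpx.deriv, hGpy.deriv]

lemma hasDerivAt_affine (a b s : ℝ) : HasDerivAt (fun t => a * t + b) a s := by
  simpa using ((hasDerivAt_id s).const_mul a).add_const b

lemma hasDerivAt_log_sq_add {b : ℝ} (s : ℝ) (hb : 0 < b) :
    HasDerivAt (fun t => log (t ^ 2 + b)) (2 * s / (s ^ 2 + b)) s := by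
  simpa using ((hasDerivAt_pow 2 s).add_const b).log (by positivity)

lemma hasDerivAt_arctan_div {c : ℝ} (s : ℝ) (hc : c ≠ 0) :
    HasDerivAt (fun t => arctan (t / c)) (c / (s ^ 2 + c ^ 2)) s := by
  refine ((hasDerivAt_arctan (s / c)).comp s ((hasDerivAt_id s).div_const c)).congr_deriv ?_
  field_simp
  ring

lemma hasDerivAt_arctan_const_div {a : ℝ} (s : ℝ) (hs : s ≠ 0) :
    HasDerivAt (fun t => arctan (a / t)) (-a / (a ^ 2 + s ^ 2)) s := by
  refine ((hasDerivAt_arctan (a / s)).comp s ((hasDerivAt_inv hs).const_mul a)).congr_deriv ?_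
  field_simp
  ring

noncomputable def batemanHamiltonian (γ ω : ℝ) (x y px py : ℝ) : ℝ :=
  px * py + ω ^ 2 * x * y - γ * (x * px - y * py)

noncomputable def batemanTheta1 (γ ω : ℝ) (_x y px _py : ℝ) : ℝ :=
  (1 / (2 * γ)) * log (px ^ 2 + ω ^ 2 * y ^ 2) + (1 / ω) * arctan (px / (ω * y))

section Bateman

variable {γ ω : ℝ} (x y px py : ℝ)

lemma batemanHamiltonian_hasDerivAt_x :
    HasDerivAt (fun s => batemanHamiltonian γ ω s y px py) (ω ^ 2 * y - γ * px) x := by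
  convert hasDerivAt_affine (ω ^ 2 * y - γ * px) (px * py + γ * y * py) x using 1
  funext s; simp only [batemanHamiltonian]; ring

lemma batemanHamiltonian_hasDerivAt_y :
    HasDerivAt (fun s => batemanHamiltonian γ ω x s px py) (ω ^ 2 * x + γ * py) y := by
  convert hasDerivAt_affine (ω ^ 2 * x + γ * py) (px * py - γ * x * px) y using 1
  funext s; simp only [batemanHamiltonian]; ring

lemma batemanHamiltonian_hasDerivAt_px :
    HasDerivAt (fun s => batemanHamiltonian γ ω x y s py) (py - γ * x) px := by
  convert hasDerivAt_affine (py - γ * x) (ω ^ 2 * x * y + γ * y * py) px using 1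
  funext s; simp only [batemanHamiltonian]; ring

lemma batemanHamiltonian_hasDerivAt_py :
    HasDerivAt (fun s => batemanHamiltonian γ ω x y px s) (px + γ * y) py := by
  convert hasDerivAt_affine (px + γ * y) (ω ^ 2 * x * y - γ * x * px) py using 1
  funext s; simp only [batemanHamiltonian]; ring

variable {x y px py}

lemma batemanTheta1_hasDerivAt_px (hγ : γ ≠ 0) (hω : ω ≠ 0) (hy : y ≠ 0) :
    HasDerivAt (fun s => batemanTheta1 γ ω x y s py)
      ((px / γ + y) / (px ^ 2 + ω ^ 2 * y ^ 2)) px := by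
  have hωy : ω * y ≠ 0 := mul_ne_zero hω hy
  refine (((hasDerivAt_log_sq_add px (by positivity)).const_mul (1 / (2 * γ))).add
    ((hasDerivAt_arctan_div px hωy).const_mul (1 / ω))).congr_deriv ?_
  field_simp

lemma batemanTheta1_hasDerivAt_y (hγ : γ ≠ 0) (hω : ω ≠ 0) (hy : y ≠ 0) :
    HasDerivAt (fun s => batemanTheta1 γ ω x s px py)
      ((ω ^ 2 * y / γ - px) / (px ^ 2 + ω ^ 2 * y ^ 2)) y := by
  have hωy : ω * y ≠ 0 := mul_ne_zero hω hy
  have hQ : px ^ 2 + ω ^ 2 * y ^ 2 ≠ 0 := by positivity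
  have hlog := (((hasDerivAt_pow 2 y).const_mul (ω ^ 2)).const_add (px ^ 2)).log hQ
  have harctan := (hasDerivAt_arctan_const_div (a := px) (ω * y) hωy).comp y
    ((hasDerivAt_id y).const_mul ω)
  refine ((hlog.const_mul (1 / (2 * γ))).add (harctan.const_mul (1 / ω))).congr_deriv ?_
  field_simp
  ring

theorem batemanTheta1_poissonBracket_hamiltonian (hγ : γ ≠ 0) (hω : ω ≠ 0) (hy : y ≠ 0) :
    poissonBracketB (batemanTheta1 γ ω) (batemanHamiltonian γ ω) x y px py = 0 := by
  have hQ : px ^ 2 + ω ^ 2 * y ^ 2 ≠ 0 := by positivity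
  rw [poissonBracketB_eq_of_hasDerivAt (hasDerivAt_const x _) (batemanTheta1_hasDerivAt_y hγ hω hy)
    (batemanTheta1_hasDerivAt_px hγ hω hy) (hasDerivAt_const py _)
    (batemanHamiltonian_hasDerivAt_x x y px py) (batemanHamiltonian_hasDerivAt_y x y px py)
    (batemanHamiltonian_hasDerivAt_px x y px py) (batemanHamiltonian_hasDerivAt_py x y px py)]
  field_simp
  ring

end Bateman

/-- Θ₁ = (1/(2γ))·log(p_x² + ω²y²) + (1/ω)·arctan(p_x/(ωy)) Poisson-commutes
with the Bateman Hamiltonian where y ≠ 0 and p_x² + ω²y² > 0. -/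
theorem bateman_theta1_conserved
    (γ ω : ℝ) (hγ : 0 < γ) (hω : 0 < ω)
    (HB Θ1 : ℝ → ℝ → ℝ → ℝ → ℝ)
    (hHB : HB = fun x y px py => px * py + ω ^ 2 * x * y - γ * (x * px - y * py))
    (hΘ1 : Θ1 = fun x y px py =>
      (1 / (2 * γ)) * Real.log (px ^ 2 + ω ^ 2 * y ^ 2)
      + (1 / ω) * Real.arctan (px / (ω * y))) :
    ∀ x y px py : ℝ, y ≠ 0 → 0 < px ^ 2 + ω ^ 2 * y ^ 2 →
      poissonBracketB Θ1 HB x y px py = 0 := by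
  intro x y px py hy _
  subst hHB hΘ1
  exact batemanTheta1_poissonBracket_hamiltonian hγ.ne' hω.ne' hy
end

section
/- For the Bateman system, the function Θ₂ = (1/(2γ))·log(p_y² + ω²x²) − (1/ω)·arctan(p_y/(ω x)) satisfies {Θ₂, H_B} = 0 on the open set where x ≠ 0 and p_y² + ω²x² > 0. -/
/-- Θ₂ = (1/(2γ))·log(p_y² + ω²x²) − (1/ω)·arctan(p_y/(ωx)) Poisson-commutes
with the Bateman Hamiltonian where x ≠ 0 and p_y² + ω²x² > 0. -/
theorem bateman_theta2_conserved
    (γ ω : ℝ) (hγ : 0 < γ) (hω : 0 < ω)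
    (HB Θ2 : ℝ → ℝ → ℝ → ℝ → ℝ)
    (hHB : HB = fun x y px py => px * py + ω ^ 2 * x * y - γ * (x * px - y * py))
    (hΘ2 : Θ2 = fun x y px py =>
      (1 / (2 * γ)) * Real.log (py ^ 2 + ω ^ 2 * x ^ 2)
      - (1 / ω) * Real.arctan (py / (ω * x))) :
    ∀ x y px py : ℝ, x ≠ 0 → 0 < py ^ 2 + ω ^ 2 * x ^ 2 →
      poissonBracketB Θ2 HB x y px py = 0 := by
  intro x y px py hx hQ
  subst hHB hΘ2
  have hωx : ω * x ≠ 0 := mul_ne_zero hω.ne' hx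
  -- HB partial derivatives
  have hHx : deriv (fun s : ℝ => px * py + ω ^ 2 * s * y - γ * (s * px - y * py)) x
      = ω ^ 2 * y - γ * px := by
    have he : (fun s : ℝ => px * py + ω ^ 2 * s * y - γ * (s * px - y * py))
        = fun s => (ω ^ 2 * y - γ * px) * s + (px * py + γ * (y * py)) := by
      funext s; ring
    rw [he]
    have := (((hasDerivAt_id x).const_mul (ω ^ 2 * y - γ * px)).add_const
      (px * py + γ * (y * py))).deriv
    simpa using this
  have hHpx : deriv (fun s : ℝ => s * py + ω ^ 2 * x * y - γ * (x * s - y * py)) px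
      = py - γ * x := by
    have he : (fun s : ℝ => s * py + ω ^ 2 * x * y - γ * (x * s - y * py))
        = fun s => (py - γ * x) * s + (ω ^ 2 * x * y + γ * (y * py)) := by
      funext s; ring
    rw [he]
    have := (((hasDerivAt_id px).const_mul (py - γ * x)).add_const
      (ω ^ 2 * x * y + γ * (y * py))).deriv
    simpa using this
  have hHy : deriv (fun s : ℝ => px * py + ω ^ 2 * x * s - γ * (x * px - s * py)) y
      = ω ^ 2 * x + γ * py := by
    have he : (fun s : ℝ => px * py + ω ^ 2 * x * s - γ * (x * px - s * py))
        = fun s => (ω ^ 2 * x + γ * py) * s + (px * py - γ * (x * px)) := by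
      funext s; ring
    rw [he]
    have := (((hasDerivAt_id y).const_mul (ω ^ 2 * x + γ * py)).add_const
      (px * py - γ * (x * px))).deriv
    simpa using this
  have hHpy : deriv (fun s : ℝ => px * s + ω ^ 2 * x * y - γ * (x * px - y * s)) py
      = px + γ * y := by
    have he : (fun s : ℝ => px * s + ω ^ 2 * x * y - γ * (x * px - y * s))
        = fun s => (px + γ * y) * s + (ω ^ 2 * x * y - γ * (x * px)) := by
      funext s; ring
    rw [he]
    have := (((hasDerivAt_id py).const_mul (px + γ * y)).add_const
      (ω ^ 2 * x * y - γ * (x * px))).deriv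
    simpa using this
  -- Θ2 partial derivative in x
  have h1 : HasDerivAt (fun s : ℝ => py ^ 2 + ω ^ 2 * s ^ 2) (ω ^ 2 * (2 * x)) x := by
    simpa [mul_comm, mul_assoc] using
      (((hasDerivAt_pow 2 x)).const_mul (ω ^ 2)).const_add (py ^ 2)
  have h2 : HasDerivAt (fun s : ℝ => Real.log (py ^ 2 + ω ^ 2 * s ^ 2))
      ((ω ^ 2 * (2 * x)) / (py ^ 2 + ω ^ 2 * x ^ 2)) x := h1.log hQ.ne'
  have h3 : HasDerivAt (fun s : ℝ => ω * s) ω x := by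
    simpa using (hasDerivAt_id x).const_mul ω
  have h4 : HasDerivAt (fun s : ℝ => py / (ω * s))
      ((0 * (ω * x) - py * ω) / (ω * x) ^ 2) x :=
    (hasDerivAt_const x py).div h3 hωx
  have h5 : HasDerivAt (fun s : ℝ => Real.arctan (py / (ω * s)))
      (1 / (1 + (py / (ω * x)) ^ 2) * ((0 * (ω * x) - py * ω) / (ω * x) ^ 2)) x := h4.arctan
  have hTx : deriv (fun s : ℝ => (1 / (2 * γ)) * Real.log (py ^ 2 + ω ^ 2 * s ^ 2)
      - (1 / ω) * Real.arctan (py / (ω * s))) x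
      = (1 / (2 * γ)) * ((ω ^ 2 * (2 * x)) / (py ^ 2 + ω ^ 2 * x ^ 2))
        - (1 / ω) * (1 / (1 + (py / (ω * x)) ^ 2) * ((0 * (ω * x) - py * ω) / (ω * x) ^ 2)) :=
    ((h2.const_mul (1 / (2 * γ))).sub (h5.const_mul (1 / ω))).deriv
  -- Θ2 partial derivative in py
  have k1 : HasDerivAt (fun s : ℝ => s ^ 2 + ω ^ 2 * x ^ 2) (2 * py) py := by
    simpa using (hasDerivAt_pow 2 py).add_const (ω ^ 2 * x ^ 2)
  have k2 : HasDerivAt (fun s : ℝ => Real.log (s ^ 2 + ω ^ 2 * x ^ 2))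
      ((2 * py) / (py ^ 2 + ω ^ 2 * x ^ 2)) py := k1.log hQ.ne'
  have k3 : HasDerivAt (fun s : ℝ => s / (ω * x)) (1 / (ω * x)) py := by
    simpa using (hasDerivAt_id py).div_const (ω * x)
  have k4 : HasDerivAt (fun s : ℝ => Real.arctan (s / (ω * x)))
      (1 / (1 + (py / (ω * x)) ^ 2) * (1 / (ω * x))) py := k3.arctan
  have hTpy : deriv (fun s : ℝ => (1 / (2 * γ)) * Real.log (s ^ 2 + ω ^ 2 * x ^ 2)
      - (1 / ω) * Real.arctan (s / (ω * x))) py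
      = (1 / (2 * γ)) * ((2 * py) / (py ^ 2 + ω ^ 2 * x ^ 2))
        - (1 / ω) * (1 / (1 + (py / (ω * x)) ^ 2) * (1 / (ω * x))) :=
    ((k2.const_mul (1 / (2 * γ))).sub (k4.const_mul (1 / ω))).deriv
  -- Θ2 is constant in px and y
  have hTpx : deriv (fun _ : ℝ => (1 / (2 * γ)) * Real.log (py ^ 2 + ω ^ 2 * x ^ 2)
      - (1 / ω) * Real.arctan (py / (ω * x))) px = 0 := deriv_const _ _
  have hTy : deriv (fun _ : ℝ => (1 / (2 * γ)) * Real.log (py ^ 2 + ω ^ 2 * x ^ 2)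
      - (1 / ω) * Real.arctan (py / (ω * x))) y = 0 := deriv_const _ _
  simp only [poissonBracketB, hHx, hHpx, hHy, hHpy, hTx, hTpy, hTpx, hTy]
  have h1p : (1 : ℝ) + (py / (ω * x)) ^ 2 ≠ 0 := by
    positivity
  field_simp
  ring
end

section
/- For the Bateman conserved quantities Θ₁ = (1/(2γ))·log(p_x² + ω²y²) + (1/ω)·arctan(p_x/(ωy)) and Θ₂ = (1/(2γ))·log(p_y² + ω²x²) − (1/ω)·arctan(p_y/(ωx)), their Poisson bracket equals {Θ₁, Θ₂} = ((ω² − γ²)H_γ − 2γ²H_ω) / (γ(γ²H_ω² + ω²H_γ²)) on the open set where x, y ≠ 0 and γ²H_ω² + ω²H_γ² ≠ 0, where H_ω = p_xp_y + ω²xy and H_γ = −γ(xp_x − yp_y). -/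
set_option maxHeartbeats 2000000


/-- The Poisson bracket of the two Bateman conserved quantities Θ₁ and Θ₂ equals
((ω² − γ²)H_γ − 2γ²H_ω)/(γ(γ²H_ω² + ω²H_γ²)) where defined. -/
theorem bateman_theta_bracket
    (γ ω : ℝ) (hγ : 0 < γ) (hω : 0 < ω)
    (Θ1 Θ2 Hω Hγ : ℝ → ℝ → ℝ → ℝ → ℝ)
    (hΘ1 : Θ1 = fun x y px py =>
      (1 / (2 * γ)) * Real.log (px ^ 2 + ω ^ 2 * y ^ 2)
      + (1 / ω) * Real.arctan (px / (ω * y)))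
    (hΘ2 : Θ2 = fun x y px py =>
      (1 / (2 * γ)) * Real.log (py ^ 2 + ω ^ 2 * x ^ 2)
      - (1 / ω) * Real.arctan (py / (ω * x)))
    (hHω : Hω = fun x y px py => px * py + ω ^ 2 * x * y)
    (hHγ : Hγ = fun x y px py => -γ * (x * px - y * py)) :
    ∀ x y px py : ℝ, x ≠ 0 → y ≠ 0 →
      γ ^ 2 * (Hω x y px py) ^ 2 + ω ^ 2 * (Hγ x y px py) ^ 2 ≠ 0 →
      poissonBracketB Θ1 Θ2 x y px py =
        ((ω ^ 2 - γ ^ 2) * Hγ x y px py - 2 * γ ^ 2 * Hω x y px py)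
          / (γ * (γ ^ 2 * (Hω x y px py) ^ 2 + ω ^ 2 * (Hγ x y px py) ^ 2)) := by
  subst hΘ1 hΘ2 hHω hHγ
  intro x y px py hx hy hne
  have hγ' : γ ≠ 0 := hγ.ne'
  have hω' : ω ≠ 0 := hω.ne'
  have hA : (0:ℝ) < px ^ 2 + ω ^ 2 * y ^ 2 := by positivity
  have hB : (0:ℝ) < py ^ 2 + ω ^ 2 * x ^ 2 := by positivity
  have hωy : ω * y ≠ 0 := mul_ne_zero hω' hy
  have hωx : ω * x ≠ 0 := mul_ne_zero hω' hx
  -- derivative of Θ1 in px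
  have h1px : HasDerivAt (fun s : ℝ =>
      (1 / (2 * γ)) * Real.log (s ^ 2 + ω ^ 2 * y ^ 2)
      + (1 / ω) * Real.arctan (s / (ω * y)))
      ((1 / (2 * γ)) * ((2 * px) / (px ^ 2 + ω ^ 2 * y ^ 2))
        + (1 / ω) * (1 / (1 + (px / (ω * y)) ^ 2) * (1 / (ω * y)))) px := by
    have hin : HasDerivAt (fun s : ℝ => s ^ 2 + ω ^ 2 * y ^ 2) (2 * px) px := by
      simpa using (hasDerivAt_pow 2 px).add_const (ω ^ 2 * y ^ 2)
    have hlog := (hin.log hA.ne')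
    have harg : HasDerivAt (fun s : ℝ => s / (ω * y)) (1 / (ω * y)) px := by
      simpa using (hasDerivAt_id px).div_const (ω * y)
    have harc := (Real.hasDerivAt_arctan (px / (ω * y))).comp px harg
    exact (hlog.const_mul (1 / (2 * γ))).add (harc.const_mul (1 / ω))
  -- derivative of Θ1 in y
  have h1y : HasDerivAt (fun s : ℝ =>
      (1 / (2 * γ)) * Real.log (px ^ 2 + ω ^ 2 * s ^ 2)
      + (1 / ω) * Real.arctan (px / (ω * s)))
      ((1 / (2 * γ)) * ((ω ^ 2 * (2 * y)) / (px ^ 2 + ω ^ 2 * y ^ 2))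
        + (1 / ω) * (1 / (1 + (px / (ω * y)) ^ 2) * (px * (-ω / (ω * y) ^ 2)))) y := by
    have hin : HasDerivAt (fun s : ℝ => px ^ 2 + ω ^ 2 * s ^ 2) (ω ^ 2 * (2 * y)) y := by
      simpa using ((hasDerivAt_pow 2 y).const_mul (ω ^ 2)).const_add (px ^ 2)
    have hlog := hin.log hA.ne'
    have harg : HasDerivAt (fun s : ℝ => px / (ω * s)) (px * (-ω / (ω * y) ^ 2)) y := by
      have h0 : HasDerivAt (fun s : ℝ => ω * s) ω y := by
        simpa using (hasDerivAt_id y).const_mul ω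
      have h1 := h0.inv hωy
      have := h1.const_mul px
      simpa [div_eq_mul_inv, neg_div] using this
    have harc := (Real.hasDerivAt_arctan (px / (ω * y))).comp y harg
    exact (hlog.const_mul (1 / (2 * γ))).add (harc.const_mul (1 / ω))
  -- derivative of Θ2 in py
  have h2py : HasDerivAt (fun s : ℝ =>
      (1 / (2 * γ)) * Real.log (s ^ 2 + ω ^ 2 * x ^ 2)
      - (1 / ω) * Real.arctan (s / (ω * x)))
      ((1 / (2 * γ)) * ((2 * py) / (py ^ 2 + ω ^ 2 * x ^ 2))
        - (1 / ω) * (1 / (1 + (py / (ω * x)) ^ 2) * (1 / (ω * x)))) py := by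
    have hin : HasDerivAt (fun s : ℝ => s ^ 2 + ω ^ 2 * x ^ 2) (2 * py) py := by
      simpa using (hasDerivAt_pow 2 py).add_const (ω ^ 2 * x ^ 2)
    have hlog := hin.log hB.ne'
    have harg : HasDerivAt (fun s : ℝ => s / (ω * x)) (1 / (ω * x)) py := by
      simpa using (hasDerivAt_id py).div_const (ω * x)
    have harc := (Real.hasDerivAt_arctan (py / (ω * x))).comp py harg
    exact (hlog.const_mul (1 / (2 * γ))).sub (harc.const_mul (1 / ω))
  -- derivative of Θ2 in x
  have h2x : HasDerivAt (fun s : ℝ =>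
      (1 / (2 * γ)) * Real.log (py ^ 2 + ω ^ 2 * s ^ 2)
      - (1 / ω) * Real.arctan (py / (ω * s)))
      ((1 / (2 * γ)) * ((ω ^ 2 * (2 * x)) / (py ^ 2 + ω ^ 2 * x ^ 2))
        - (1 / ω) * (1 / (1 + (py / (ω * x)) ^ 2) * (py * (-ω / (ω * x) ^ 2)))) x := by
    have hin : HasDerivAt (fun s : ℝ => py ^ 2 + ω ^ 2 * s ^ 2) (ω ^ 2 * (2 * x)) x := by
      simpa using ((hasDerivAt_pow 2 x).const_mul (ω ^ 2)).const_add (py ^ 2)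
    have hlog := hin.log hB.ne'
    have harg : HasDerivAt (fun s : ℝ => py / (ω * s)) (py * (-ω / (ω * x) ^ 2)) x := by
      have h0 : HasDerivAt (fun s : ℝ => ω * s) ω x := by
        simpa using (hasDerivAt_id x).const_mul ω
      have h1 := h0.inv hωx
      have := h1.const_mul py
      simpa [div_eq_mul_inv, neg_div] using this
    have harc := (Real.hasDerivAt_arctan (py / (ω * x))).comp x harg
    exact (hlog.const_mul (1 / (2 * γ))).sub (harc.const_mul (1 / ω))
  have key : (1:ℝ) + (px / (ω * y)) ^ 2 = (px ^ 2 + ω ^ 2 * y ^ 2) / (ω * y) ^ 2 := by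
    field_simp; ring
  have key2 : (1:ℝ) + (py / (ω * x)) ^ 2 = (py ^ 2 + ω ^ 2 * x ^ 2) / (ω * x) ^ 2 := by
    field_simp; ring
  have e1 : (1 / (2 * γ)) * ((2 * px) / (px ^ 2 + ω ^ 2 * y ^ 2))
        + (1 / ω) * (1 / (1 + (px / (ω * y)) ^ 2) * (1 / (ω * y)))
      = (px + γ * y) / (γ * (px ^ 2 + ω ^ 2 * y ^ 2)) := by
    rw [key]; field_simp
  have e2 : (1 / (2 * γ)) * ((ω ^ 2 * (2 * y)) / (px ^ 2 + ω ^ 2 * y ^ 2))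
        + (1 / ω) * (1 / (1 + (px / (ω * y)) ^ 2) * (px * (-ω / (ω * y) ^ 2)))
      = (ω ^ 2 * y - γ * px) / (γ * (px ^ 2 + ω ^ 2 * y ^ 2)) := by
    rw [key]; field_simp; ring
  have e3 : (1 / (2 * γ)) * ((2 * py) / (py ^ 2 + ω ^ 2 * x ^ 2))
        - (1 / ω) * (1 / (1 + (py / (ω * x)) ^ 2) * (1 / (ω * x)))
      = (py - γ * x) / (γ * (py ^ 2 + ω ^ 2 * x ^ 2)) := by
    rw [key2]; field_simp
  have e4 : (1 / (2 * γ)) * ((ω ^ 2 * (2 * x)) / (py ^ 2 + ω ^ 2 * x ^ 2))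
        - (1 / ω) * (1 / (1 + (py / (ω * x)) ^ 2) * (py * (-ω / (ω * x) ^ 2)))
      = (ω ^ 2 * x + γ * py) / (γ * (py ^ 2 + ω ^ 2 * x ^ 2)) := by
    rw [key2]; field_simp; ring
  have hne' : γ ^ 2 * (px * py + ω ^ 2 * x * y) ^ 2
      + ω ^ 2 * (-γ * (x * px - y * py)) ^ 2 ≠ 0 := hne
  simp only [poissonBracketB]
  rw [h1px.deriv, h1y.deriv, h2py.deriv, h2x.deriv, deriv_const', deriv_const',
    e1, e2, e3, e4]
  rw [div_mul_div_comm, div_mul_div_comm]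
  have hd : γ * (px ^ 2 + ω ^ 2 * y ^ 2) * (γ * (py ^ 2 + ω ^ 2 * x ^ 2)) ≠ 0 := by
    positivity
  have hD : γ * (γ ^ 2 * (px * py + ω ^ 2 * x * y) ^ 2
      + ω ^ 2 * (-γ * (x * px - y * py)) ^ 2) ≠ 0 := mul_ne_zero hγ' hne'
  have habd : γ * (γ ^ 2 * (px * py + ω ^ 2 * x * y) ^ 2
        + ω ^ 2 * (-γ * (x * px - y * py)) ^ 2)
      = γ ^ 3 * ((px ^ 2 + ω ^ 2 * y ^ 2) * (py ^ 2 + ω ^ 2 * x ^ 2)) := by ring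
  rw [habd]
  field_simp
  ring
end

section
/- For the position-dependent-mass Hamiltonian H = p₁²/(2q₁²) + p₂²q₂⁴/2 + q₁⁴/2 + 2/q₂², the function θ₁ = −(1/2)·arctan(p₁/q₁³) satisfies {θ₁, H₁} = 1 where H₁ = p₁²/(2q₁²) + q₁⁴/2, on the set q₁ ≠ 0. -/
/-- One-dimensional Poisson bracket in coordinates (q₁, p₁). -/
noncomputable def poissonBracket1 (F G : ℝ → ℝ → ℝ) (q p : ℝ) : ℝ :=
  deriv (fun x => F x p) q * deriv (fun x => G q x) p
  - deriv (fun x => F q x) p * deriv (fun x => G x p) q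

/-- For the position-dependent-mass Hamiltonian H₁ = p₁²/(2q₁²) + q₁⁴/2,
the angle θ₁ = −(1/2)·arctan(p₁/q₁³) satisfies {θ₁, H₁} = 1 where q₁ ≠ 0. -/
theorem pdm_angle_variable_1
    (H1 θ1 : ℝ → ℝ → ℝ)
    (hH1 : H1 = fun q1 p1 => p1 ^ 2 / (2 * q1 ^ 2) + q1 ^ 4 / 2)
    (hθ1 : θ1 = fun q1 p1 => -(1 / 2) * Real.arctan (p1 / q1 ^ 3)) :
    ∀ q1 p1 : ℝ, q1 ≠ 0 → poissonBracket1 θ1 H1 q1 p1 = 1 := by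
  subst hH1 hθ1
  intro q p hq
  have hq3 : q ^ 3 ≠ 0 := pow_ne_zero 3 hq
  have hq2 : (2 : ℝ) * q ^ 2 ≠ 0 := by positivity
  have harg : (1 : ℝ) + (p / q ^ 3) ^ 2 ≠ 0 := by positivity
  -- derivative of θ in q
  have h1 : HasDerivAt (fun x : ℝ => p / x ^ 3)
      ((0 * q ^ 3 - p * (↑3 * q ^ 2)) / (q ^ 3) ^ 2) q :=
    (hasDerivAt_const q p).div (hasDerivAt_pow 3 q) hq3
  have hθq : HasDerivAt (fun x : ℝ => -(1 / 2) * Real.arctan (p / x ^ 3))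
      (-(1 / 2) * ((1 / (1 + (p / q ^ 3) ^ 2)) *
        ((0 * q ^ 3 - p * (↑3 * q ^ 2)) / (q ^ 3) ^ 2))) q := by
    exact (((Real.hasDerivAt_arctan (p / q ^ 3)).comp q h1).const_mul _)
  -- derivative of θ in p
  have h2 : HasDerivAt (fun x : ℝ => x / q ^ 3) (1 / q ^ 3) p := by
    simpa using (hasDerivAt_id p).div_const (q ^ 3)
  have hθp : HasDerivAt (fun x : ℝ => -(1 / 2) * Real.arctan (x / q ^ 3))
      (-(1 / 2) * ((1 / (1 + (p / q ^ 3) ^ 2)) * (1 / q ^ 3))) p :=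
    (((Real.hasDerivAt_arctan (p / q ^ 3)).comp p h2).const_mul _)
  -- derivative of H in p
  have hHp : HasDerivAt (fun x : ℝ => x ^ 2 / (2 * q ^ 2) + q ^ 4 / 2)
      ((↑2 * p ^ 1) / (2 * q ^ 2)) p := by
    simpa using ((hasDerivAt_pow 2 p).div_const (2 * q ^ 2)).add_const (q ^ 4 / 2)
  -- derivative of H in q
  have h3 : HasDerivAt (fun x : ℝ => 2 * x ^ 2) (2 * (↑2 * q ^ 1)) q :=
    (hasDerivAt_pow 2 q).const_mul 2
  have hHq : HasDerivAt (fun x : ℝ => p ^ 2 / (2 * x ^ 2) + x ^ 4 / 2)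
      ((0 * (2 * q ^ 2) - p ^ 2 * (2 * (↑2 * q ^ 1))) / (2 * q ^ 2) ^ 2
        + (↑4 * q ^ 3) / 2) q :=
    (((hasDerivAt_const q (p ^ 2)).div h3 hq2)).add ((hasDerivAt_pow 4 q).div_const 2)
  unfold poissonBracket1
  rw [hθq.deriv, hθp.deriv, hHp.deriv, hHq.deriv]
  have key : (1 : ℝ) + (p / q ^ 3) ^ 2 = (q ^ 6 + p ^ 2) / q ^ 6 := by
    field_simp
  rw [key]
  have hs : q ^ 6 + p ^ 2 ≠ 0 := by positivity
  field_simp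
  ring
end

section
/- For the position-dependent-mass system with H₂ = p₂²q₂⁴/2 + 2/q₂², the function θ₂ = (1/2)·arctan(p₂q₂³/2) satisfies {θ₂, H₂} = 1 on the set q₂ ≠ 0. -/
theorem poissonBracket1_eq_of_hasDerivAt {F G : ℝ → ℝ → ℝ} {q p Fq Fp Gq Gp : ℝ}
    (hFq : HasDerivAt (fun x => F x p) Fq q) (hFp : HasDerivAt (fun x => F q x) Fp p)
    (hGq : HasDerivAt (fun x => G x p) Gq q) (hGp : HasDerivAt (fun x => G q x) Gp p) :
    poissonBracket1 F G q p = Fq * Gp - Fp * Gq := by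
  rw [poissonBracket1, hFq.deriv, hFp.deriv, hGq.deriv, hGp.deriv]

theorem poissonBracket1_comp_left {f : ℝ → ℝ} {u G : ℝ → ℝ → ℝ} {q p f' : ℝ}
    (hf : HasDerivAt f f' (u q p)) (huq : DifferentiableAt ℝ (fun x => u x p) q)
    (hup : DifferentiableAt ℝ (fun x => u q x) p) :
    poissonBracket1 (fun q p => f (u q p)) G q p = f' * poissonBracket1 u G q p := by
  have hfuq : HasDerivAt (fun x => f (u x p)) (f' * deriv (fun x => u x p) q) q :=
    hf.comp q huq.hasDerivAt
  have hfup : HasDerivAt (fun x => f (u q x)) (f' * deriv (fun x => u q x) p) p :=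
    hf.comp p hup.hasDerivAt
  rw [poissonBracket1, poissonBracket1, hfuq.deriv, hfup.deriv]
  ring

theorem poissonBracket1_pdm_generator {q : ℝ} (hq : q ≠ 0) (p : ℝ) :
    poissonBracket1 (fun q p => p * q ^ 3 / 2) (fun q p => p ^ 2 * q ^ 4 / 2 + 2 / q ^ 2) q p
      = 2 * (1 + (p * q ^ 3 / 2) ^ 2) := by
  have huq : HasDerivAt (fun x => p * x ^ 3 / 2) (p * (3 * q ^ 2) / 2) q := by
    simpa using ((hasDerivAt_pow 3 q).const_mul p).div_const 2
  have hup : HasDerivAt (fun x => x * q ^ 3 / 2) (q ^ 3 / 2) p := by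
    simpa using ((hasDerivAt_id p).mul_const (q ^ 3)).div_const 2
  have hHq : HasDerivAt (fun x => p ^ 2 * x ^ 4 / 2 + 2 / x ^ 2)
      (p ^ 2 * (4 * q ^ 3) / 2 + -(2 * (2 * q)) / (q ^ 2) ^ 2) q := by
    have hkin : HasDerivAt (fun x => p ^ 2 * x ^ 4 / 2) (p ^ 2 * (4 * q ^ 3) / 2) q := by
      simpa using ((hasDerivAt_pow 4 q).const_mul (p ^ 2)).div_const 2
    have hsq : HasDerivAt (fun x => x ^ 2) (2 * q) q := by simpa using hasDerivAt_pow 2 q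
    have hpot : HasDerivAt (fun x => 2 / x ^ 2) (-(2 * (2 * q)) / (q ^ 2) ^ 2) q := by
      simpa [Pi.div_def] using (hasDerivAt_const q (2 : ℝ)).div hsq (pow_ne_zero 2 hq)
    exact hkin.add hpot
  have hHp : HasDerivAt (fun x => x ^ 2 * q ^ 4 / 2 + 2 / q ^ 2) (p * q ^ 4) p := by
    have hkin : HasDerivAt (fun x => x ^ 2 * q ^ 4 / 2) (2 * p * q ^ 4 / 2) p := by
      simpa using ((hasDerivAt_pow 2 p).mul_const (q ^ 4)).div_const 2
    exact (hkin.add_const (2 / q ^ 2)).congr_deriv (by ring)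
  rw [poissonBracket1_eq_of_hasDerivAt (F := fun q p => p * q ^ 3 / 2)
    (G := fun q p => p ^ 2 * q ^ 4 / 2 + 2 / q ^ 2) huq hup hHq hHp]
  field_simp
  ring

/-- For the position-dependent-mass Hamiltonian H₂ = p₂²q₂⁴/2 + 2/q₂²,
the angle θ₂ = (1/2)·arctan(p₂q₂³/2) satisfies {θ₂, H₂} = 1 where q₂ ≠ 0. -/
theorem pdm_angle_variable_2
    (H2 θ2 : ℝ → ℝ → ℝ)
    (hH2 : H2 = fun q2 p2 => p2 ^ 2 * q2 ^ 4 / 2 + 2 / q2 ^ 2)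
    (hθ2 : θ2 = fun q2 p2 => (1 / 2) * Real.arctan (p2 * q2 ^ 3 / 2)) :
    ∀ q2 p2 : ℝ, q2 ≠ 0 → poissonBracket1 θ2 H2 q2 p2 = 1 := by
  intro q p hq
  subst hH2 hθ2
  set u := p * q ^ 3 / 2
  have hbracket : poissonBracket1 (fun q p => 1 / 2 * Real.arctan (p * q ^ 3 / 2))
      (fun q p => p ^ 2 * q ^ 4 / 2 + 2 / q ^ 2) q p
      = 1 / 2 * (1 / (1 + u ^ 2)) * (2 * (1 + u ^ 2)) := by
    rw [← poissonBracket1_pdm_generator hq p]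
    exact poissonBracket1_comp_left (f := fun t => 1 / 2 * Real.arctan t)
      ((Real.hasDerivAt_arctan u).const_mul _) (by fun_prop) (by fun_prop)
  rw [hbracket]
  field_simp
end

section
/- For the position-dependent-mass Hamiltonian H = p₁²/(2q₁²) + p₂²q₂⁴/2 + q₁⁴/2 + 2/q₂² on the set q₁, q₂ ≠ 0, the function Θ = −(1/2)·arctan(p₁/q₁³) − (1/2)·arctan(p₂q₂³/2) satisfies {Θ, H} = 0. -/
/-!
Both H and Θ separate: H = H₁(q₁, p₁) + H₂(q₂, p₂) and Θ = θ₁(q₁, p₁) + θ₂(q₂, p₂), so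
{Θ, H} = {θ₁, H₁} + {θ₂, H₂}. With u = p₁/q₁³ and v = p₂q₂³/2 one computes
{u, H₁} = -2(1 + u²) and {v, H₂} = 2(1 + v²); the derivative 1/(1 + x²) of arctan cancels
these factors, so {θ₁, H₁} = 1 and {θ₂, H₂} = -1: each θᵢ is an angle variable of its own
degree of freedom, running at opposite unit speeds.
-/

open Real

namespace PositionDependentMass

noncomputable def poissonBracket₁ (f g : ℝ → ℝ → ℝ) (q p : ℝ) : ℝ :=
  deriv (fun x => f x p) q * deriv (fun x => g q x) p
  - deriv (fun x => f q x) p * deriv (fun x => g x p) q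

theorem poissonBracket_add_separable (f₁ f₂ g₁ g₂ : ℝ → ℝ → ℝ) (q1 q2 p1 p2 : ℝ) :
    poissonBracket (fun q1 q2 p1 p2 => f₁ q1 p1 + f₂ q2 p2)
      (fun q1 q2 p1 p2 => g₁ q1 p1 + g₂ q2 p2) q1 q2 p1 p2
      = poissonBracket₁ f₁ g₁ q1 p1 + poissonBracket₁ f₂ g₂ q2 p2 := by
  simp only [poissonBracket, poissonBracket₁, deriv_add_const, deriv_const_add]
  ring

theorem poissonBracket₁_const_mul_arctan {u g : ℝ → ℝ → ℝ} {q p uq up gq gp : ℝ} (c : ℝ)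
    (huq : HasDerivAt (fun x => u x p) uq q) (hup : HasDerivAt (fun x => u q x) up p)
    (hgq : HasDerivAt (fun x => g x p) gq q) (hgp : HasDerivAt (fun x => g q x) gp p) :
    poissonBracket₁ (fun q p => c * arctan (u q p)) g q p
      = c * (uq * gp - up * gq) / (1 + u q p ^ 2) := by
  simp only [poissonBracket₁, (huq.arctan.const_mul c).deriv,
    (hup.arctan.const_mul c).deriv, hgq.deriv, hgp.deriv]
  ring

noncomputable def hamiltonian₁ (q p : ℝ) : ℝ := p ^ 2 / (2 * q ^ 2) + q ^ 4 / 2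

noncomputable def hamiltonian₂ (q p : ℝ) : ℝ := p ^ 2 * q ^ 4 / 2 + 2 / q ^ 2

noncomputable def angle₁ (q p : ℝ) : ℝ := -(1 / 2) * arctan (p / q ^ 3)

noncomputable def angle₂ (q p : ℝ) : ℝ := -(1 / 2) * arctan (p * q ^ 3 / 2)

theorem poissonBracket₁_angle₁_hamiltonian₁ {q : ℝ} (hq : q ≠ 0) (p : ℝ) :
    poissonBracket₁ angle₁ hamiltonian₁ q p = 1 := by
  have huq : HasDerivAt (fun x => p / x ^ 3) (-3 * p / q ^ 4) q :=
    ((hasDerivAt_const q p).div (hasDerivAt_pow 3 q) (pow_ne_zero 3 hq)).congr_deriv (by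
      field_simp
      ring)
  have hup : HasDerivAt (fun x => x / q ^ 3) (1 / q ^ 3) p := (hasDerivAt_id p).div_const _
  have hHq : HasDerivAt (fun x => p ^ 2 / (2 * x ^ 2) + x ^ 4 / 2)
      (-p ^ 2 / q ^ 3 + 2 * q ^ 3) q :=
    (((hasDerivAt_const q (p ^ 2)).div ((hasDerivAt_pow 2 q).const_mul 2)
      (by positivity)).add ((hasDerivAt_pow 4 q).div_const 2)).congr_deriv (by
      field_simp
      norm_num
      ring)
  have hHp : HasDerivAt (fun x => x ^ 2 / (2 * q ^ 2) + q ^ 4 / 2) (p / q ^ 2) p :=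
    (((hasDerivAt_pow 2 p).div_const (2 * q ^ 2)).add_const _).congr_deriv (by
      field_simp
      norm_num)
  refine (poissonBracket₁_const_mul_arctan (u := fun q p => p / q ^ 3) _
    huq hup hHq hHp).trans ?_
  field_simp
  ring

theorem poissonBracket₁_angle₂_hamiltonian₂ {q : ℝ} (hq : q ≠ 0) (p : ℝ) :
    poissonBracket₁ angle₂ hamiltonian₂ q p = -1 := by
  have huq : HasDerivAt (fun x => p * x ^ 3 / 2) (3 * p * q ^ 2 / 2) q :=
    (((hasDerivAt_pow 3 q).const_mul p).div_const 2).congr_deriv (by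
      norm_num
      ring)
  have hup : HasDerivAt (fun x => x * q ^ 3 / 2) (q ^ 3 / 2) p :=
    (((hasDerivAt_id p).mul_const (q ^ 3)).div_const 2).congr_deriv (by simp)
  have hHq : HasDerivAt (fun x => p ^ 2 * x ^ 4 / 2 + 2 / x ^ 2)
      (2 * p ^ 2 * q ^ 3 - 4 / q ^ 3) q :=
    ((((hasDerivAt_pow 4 q).const_mul (p ^ 2)).div_const 2).add
      ((hasDerivAt_const q 2).div (hasDerivAt_pow 2 q) (by positivity))).congr_deriv (by
      field_simp
      norm_num
      ring)
  have hHp : HasDerivAt (fun x => x ^ 2 * q ^ 4 / 2 + 2 / q ^ 2) (p * q ^ 4) p :=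
    ((((hasDerivAt_pow 2 p).mul_const (q ^ 4)).div_const 2).add_const _).congr_deriv (by
      norm_num
      ring)
  refine (poissonBracket₁_const_mul_arctan (u := fun q p => p * q ^ 3 / 2) _
    huq hup hHq hHp).trans ?_
  field_simp
  ring

end PositionDependentMass

open PositionDependentMass in
/-- For the position-dependent-mass Hamiltonian
H = p₁²/(2q₁²) + p₂²q₂⁴/2 + q₁⁴/2 + 2/q₂², the quantity
Θ = −(1/2)·arctan(p₁/q₁³) − (1/2)·arctan(p₂q₂³/2) is conserved: {Θ, H} = 0. -/
theorem pdm_theta_conserved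
    (H Θ : ℝ → ℝ → ℝ → ℝ → ℝ)
    (hH : H = fun q1 q2 p1 p2 =>
      p1 ^ 2 / (2 * q1 ^ 2) + p2 ^ 2 * q2 ^ 4 / 2 + q1 ^ 4 / 2 + 2 / q2 ^ 2)
    (hΘ : Θ = fun q1 q2 p1 p2 =>
      -(1 / 2) * Real.arctan (p1 / q1 ^ 3) - (1 / 2) * Real.arctan (p2 * q2 ^ 3 / 2)) :
    ∀ q1 q2 p1 p2 : ℝ, q1 ≠ 0 → q2 ≠ 0 →
      poissonBracket Θ H q1 q2 p1 p2 = 0 := by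
  intro q1 q2 p1 p2 hq1 hq2
  have hΘ_split : Θ = fun q1 q2 p1 p2 => angle₁ q1 p1 + angle₂ q2 p2 := by
    rw [hΘ]
    funext q1 q2 p1 p2
    rw [angle₁, angle₂]
    ring
  have hH_split : H = fun q1 q2 p1 p2 => hamiltonian₁ q1 p1 + hamiltonian₂ q2 p2 := by
    rw [hH]
    funext q1 q2 p1 p2
    rw [hamiltonian₁, hamiltonian₂]
    ring
  rw [hΘ_split, hH_split, poissonBracket_add_separable,
    poissonBracket₁_angle₁_hamiltonian₁ hq1, poissonBracket₁_angle₂_hamiltonian₂ hq2]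
  norm_num
end
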